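/- Let k be a field, 𝔤 a Lie algebra over k, 𝔥 ⊆ 𝔤 a nilpotent Lie subalgebra, and let ν be an additive map from the additive group of linear functionals χ : 𝔥 →ₗ[k] k to ℝ. Form the Laurent loop algebra 𝔤[t,t⁻¹] := k[t,t⁻¹] ⊗_k 𝔤, a Lie algebra over k[t,t⁻¹] (hence over k) with bracket satisfying ⁅f ⊗ v, g ⊗ w⁆ = fg ⊗ ⁅v,w⁆. For r ∈ ℝ define the k-submodules 𝔨_r := ⨆ { tⁱ · rootSpace(𝔥,χ) : χ a linear functional on 𝔥, i ∈ ℤ, ν(χ) + i ≥ r } and 𝔨_{r+} := ⨆ { tⁱ · rootSpace(𝔥,χ) : ν(χ) + i > r }, where tⁱ · M denotes the image of M under v ↦ tⁱ ⊗ v. Then for all r, s ∈ ℝ one has ⁅𝔨_r, 𝔨_s⁆ ⊆ 𝔨_{r+s} and ⁅𝔨_r, 𝔨_{s+}⁆ ⊆ 𝔨_{(r+s)+}. In particular, for every r ≥ 0 the submodules 𝔨_r and 𝔨_{r+} are Lie subalgebras of 𝔤[t,t⁻¹], and ⁅𝔨_0, 𝔨_{0+}⁆ ⊆ 𝔨_{0+},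 i.e. 𝔨_{0+} is an ideal in 𝔨_0. -/

import Mathlib

/-!
In `k[t,t⁻¹] ⊗ 𝔤` one has `⁅tⁱ ⊗ v, tʲ ⊗ w⁆ = tⁱ⁺ʲ ⊗ ⁅v, w⁆`, and the bracket of the root spaces
for `χ₁` and `χ₂` lies in the root space for `χ₁ + χ₂`. Hence the bracket of the pieces
`tⁱ · rootSpace(𝔥, χ₁)` and `tʲ · rootSpace(𝔥, χ₂)` is the piece of index `(χ₁ + χ₂, i + j)`, whose
value `ν(χ₁ + χ₂) + i + j` is the sum of the two values by additivity of `ν`. Bilinearity of the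
bracket carries this over to the suprema `𝔨_r`, `𝔨_{r+}`.
-/

open scoped TensorProduct

open LieAlgebra LaurentPolynomial

noncomputable section

namespace LaurentLoopAlgebra

variable {R L : Type*} [CommRing R] [LieRing L] [LieAlgebra R L]

theorem T_tmul_lie_T_tmul (i j : ℤ) (x y : L) :
    ⁅(T i : R[T;T⁻¹]) ⊗ₜ[R] x, (T j : R[T;T⁻¹]) ⊗ₜ[R] y⁆ = (T (i + j) : R[T;T⁻¹]) ⊗ₜ[R] ⁅x, y⁆ := by
  rw [ExtendScalars.bracket_tmul, T_add]

variable (H : LieSubalgebra R L) [LieRing.IsNilpotent H]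

def tPowRootSpace (χ : H → R) (i : ℤ) : Submodule R (R[T;T⁻¹] ⊗[R] L) :=
  (rootSpace H χ : Submodule R L).map (TensorProduct.mk R R[T;T⁻¹] L (T i))

variable {H}

theorem lie_mem_tPowRootSpace {χ₁ χ₂ : H → R} {i j : ℤ} {x y : R[T;T⁻¹] ⊗[R] L}
    (hx : x ∈ tPowRootSpace H χ₁ i) (hy : y ∈ tPowRootSpace H χ₂ j) :
    ⁅x, y⁆ ∈ tPowRootSpace H (χ₁ + χ₂) (i + j) := by
  obtain ⟨v, hv, rfl⟩ := hx
  obtain ⟨w, hw, rfl⟩ := hy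
  exact ⟨⁅v, w⁆, lie_mem_genWeightSpace_of_mem_genWeightSpace hv hw,
    (T_tmul_lie_T_tmul i j v w).symm⟩

variable (H) in
/-- With `P χ i := r ≤ ν χ + i` this is the Moy–Prasad piece `𝔨_r`, with `r < ν χ + i` it is
`𝔨_{r+}`. -/
def iSupTPowRootSpace (P : (H →ₗ[R] R) → ℤ → Prop) : Submodule R (R[T;T⁻¹] ⊗[R] L) :=
  ⨆ (χ : H →ₗ[R] R) (i : ℤ) (_ : P χ i), tPowRootSpace H χ i

theorem lie_mem_iSupTPowRootSpace {P Q S : (H →ₗ[R] R) → ℤ → Prop}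
    (hPQS : ∀ χ₁ i χ₂ j, P χ₁ i → Q χ₂ j → S (χ₁ + χ₂) (i + j))
    {x y : R[T;T⁻¹] ⊗[R] L} (hx : x ∈ iSupTPowRootSpace H P) (hy : y ∈ iSupTPowRootSpace H Q) :
    ⁅x, y⁆ ∈ iSupTPowRootSpace H S := by
  -- The laws are eta-expanded: only then does `⁅·, ·⁆` unify with the `ExtendScalars` bracket.
  let bracket : R[T;T⁻¹] ⊗[R] L →ₗ[R] R[T;T⁻¹] ⊗[R] L →ₗ[R] R[T;T⁻¹] ⊗[R] L :=
    LinearMap.mk₂ R (⁅·, ·⁆) (fun x y z => add_lie x y z) (fun c x y => smul_lie c x y)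
      (fun x y z => lie_add x y z) (fun c x y => lie_smul c x y)
  suffices Submodule.map₂ bracket (iSupTPowRootSpace H P) (iSupTPowRootSpace H Q) ≤
      iSupTPowRootSpace H S from
    this (Submodule.apply_mem_map₂ bracket hx hy)
  simp only [iSupTPowRootSpace, Submodule.map₂_iSup_left]
  simp only [Submodule.map₂_iSup_right, iSup_le_iff]
  intro χ₁ i hP χ₂ j hQ
  refine Submodule.map₂_le.mpr fun x hx y hy => ?_
  exact Submodule.mem_iSup_of_mem (χ₁ + χ₂) <| Submodule.mem_iSup_of_mem (i + j) <|
    Submodule.mem_iSup_of_mem (hPQS χ₁ i χ₂ j hP hQ) (lie_mem_tPowRootSpace hx hy)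

end LaurentLoopAlgebra

end

/-- Moy–Prasad-type filtration on the Laurent loop algebra `k[t,t⁻¹] ⊗ₖ 𝔤`.  For a nilpotent Lie
subalgebra `𝔥 ⊆ 𝔤` and an additive map `ν` from linear functionals on `𝔥` to `ℝ`, set
`𝔨 r = ⨆ {ν χ + i ≥ r} tⁱ · rootSpace(𝔥,χ)` and `𝔨₊ r = ⨆ {ν χ + i > r} tⁱ · rootSpace(𝔥,χ)`.
Then `⁅𝔨 r, 𝔨 s⁆ ⊆ 𝔨 (r+s)` and `⁅𝔨 r, 𝔨₊ s⁆ ⊆ 𝔨₊ (r+s)`; in particular, for `r ≥ 0` both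
`𝔨 r` and `𝔨₊ r` are closed under the bracket (hence are Lie subalgebras), and `𝔨₊ 0` is an
ideal in `𝔨 0`. -/
theorem stmt3 {k : Type*} [Field k] {g : Type*} [LieRing g] [LieAlgebra k g]
    (h : LieSubalgebra k g) [LieRing.IsNilpotent h]
    (ν : (h →ₗ[k] k) → ℝ)
    (hν : ∀ χ₁ χ₂ : h →ₗ[k] k, ν (χ₁ + χ₂) = ν χ₁ + ν χ₂)
    (K Kp : ℝ → Submodule k (LaurentPolynomial k ⊗[k] g))
    (hK : ∀ r : ℝ, K r =
      ⨆ (χ : h →ₗ[k] k) (i : ℤ) (_ : ν χ + (i : ℝ) ≥ r),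
        ((LieAlgebra.rootSpace h ⇑χ : LieSubmodule k h g) : Submodule k g).map
          (TensorProduct.mk k (LaurentPolynomial k) g (LaurentPolynomial.T i)))
    (hKp : ∀ r : ℝ, Kp r =
      ⨆ (χ : h →ₗ[k] k) (i : ℤ) (_ : ν χ + (i : ℝ) > r),
        ((LieAlgebra.rootSpace h ⇑χ : LieSubmodule k h g) : Submodule k g).map
          (TensorProduct.mk k (LaurentPolynomial k) g (LaurentPolynomial.T i))) :
    (∀ r s : ℝ, ∀ x ∈ K r, ∀ y ∈ K s, ⁅x, y⁆ ∈ K (r + s)) ∧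
    (∀ r s : ℝ, ∀ x ∈ K r, ∀ y ∈ Kp s, ⁅x, y⁆ ∈ Kp (r + s)) ∧
    (∀ r : ℝ, 0 ≤ r → ∀ x ∈ K r, ∀ y ∈ K r, ⁅x, y⁆ ∈ K r) ∧
    (∀ r : ℝ, 0 ≤ r → ∀ x ∈ Kp r, ∀ y ∈ Kp r, ⁅x, y⁆ ∈ Kp r) ∧
    (∀ x ∈ K 0, ∀ y ∈ Kp 0, ⁅x, y⁆ ∈ Kp 0) := by
  have weight_add : ∀ (χ₁ χ₂ : h →ₗ[k] k) (i j : ℤ),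
      ν (χ₁ + χ₂) + ((i + j : ℤ) : ℝ) = (ν χ₁ + i) + (ν χ₂ + j) := by
    intro χ₁ χ₂ i j
    rw [hν]
    push_cast
    ring
  have hK' : ∀ r, K r = LaurentLoopAlgebra.iSupTPowRootSpace h (fun χ i => ν χ + i ≥ r) := hK
  have hKp' : ∀ r, Kp r = LaurentLoopAlgebra.iSupTPowRootSpace h (fun χ i => ν χ + i > r) := hKp
  simp only [hK', hKp']
  refine ⟨fun r s => ?_, fun r s => ?_, fun r hr => ?_, fun r hr => ?_, ?_⟩ <;>
    refine fun x hx y hy =>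
      LaurentLoopAlgebra.lie_mem_iSupTPowRootSpace (fun χ₁ i χ₂ j h₁ h₂ => ?_) hx hy <;>
    rw [weight_add] <;> linarith
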